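/- Let A ⊆ ℕ belong to a syndetic, idempotent filter on ℕ. Then for every minimal left ideal L of (βℕ,+) there exists an idempotent ultrafilter p ∈ L with A ∈ p. In particular, for every thick set H ⊆ ℕ, the set A ∩ H is central. -/
import Mathlib


/-- The set `A - n`, difference taken inside the positive integers:
`A - n = {m : m >= 1 and m + n ∈ A}`. -/
def NSub (A : Set ℕ) (n : ℕ) : Set ℕ := {m : ℕ | 0 < m ∧ m + n ∈ A}

/-- `S ⊆ ℕ` is syndetic if `ℕ = ⋃_{i=1}^{N} (S - i)` for some `N ≥ 1`. -/
def Syndetic (S : Set ℕ) : Prop :=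
  ∃ N : ℕ, 0 < N ∧ ∀ m : ℕ, 0 < m → ∃ i : ℕ, 1 ≤ i ∧ i ≤ N ∧ m + i ∈ S

/-- `S ⊆ ℕ` is thick if every finite subset of `ℕ` has a translate inside `S`. -/
def Thick (S : Set ℕ) : Prop :=
  ∀ F : Finset ℕ, ∃ n : ℕ, 0 < n ∧ ∀ f ∈ F, f + n ∈ S

/-- Addition on `βℕ`: `A ∈ p + q ↔ {n | A - n ∈ q} ∈ p`, where `A - n = {m | m + n ∈ A}`. -/
def uAdd (p q : Ultrafilter ℕ) : Ultrafilter ℕ :=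
  p.bind fun n => q.map fun m => m + n

/-- A left ideal of `(βℕ, +)`. -/
def IsLeftIdeal (L : Set (Ultrafilter ℕ)) : Prop :=
  L.Nonempty ∧ ∀ p : Ultrafilter ℕ, ∀ q ∈ L, uAdd p q ∈ L

/-- A minimal left ideal of `(βℕ, +)`. -/
def IsMinimalLeftIdeal (L : Set (Ultrafilter ℕ)) : Prop :=
  IsLeftIdeal L ∧ ∀ L' : Set (Ultrafilter ℕ), IsLeftIdeal L' → L' ⊆ L → L' = L

/-- A filter of subsets of `ℕ`: an upward-closed collection closed under finite
intersections. -/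
def IsSetFilter (F : Set (Set ℕ)) : Prop :=
  (∀ ⦃A B : Set ℕ⦄, A ∈ F → A ⊆ B → B ∈ F) ∧
    ∀ ⦃A B : Set ℕ⦄, A ∈ F → B ∈ F → A ∩ B ∈ F

/-- `F` is idempotent: `F ⊆ F + F`, i.e. `A - F := {n | A - n ∈ F}` belongs to `F`
for every `A ∈ F`. -/
def IdempotentFam (F : Set (Set ℕ)) : Prop :=
  ∀ A ∈ F, {n : ℕ | 0 < n ∧ NSub A n ∈ F} ∈ F

/-- A set is central if it belongs to some idempotent ultrafilter lying in a minimal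
left ideal of `(βℕ, +)`. -/
def Central (A : Set ℕ) : Prop :=
  ∃ p : Ultrafilter ℕ, uAdd p p = p ∧
    (∃ L : Set (Ultrafilter ℕ), IsMinimalLeftIdeal L ∧ p ∈ L) ∧ A ∈ p

open Filter

attribute [local instance] Ultrafilter.add Ultrafilter.addSemigroup

lemma mem_uAdd {s : Set ℕ} {p q : Ultrafilter ℕ} :
    s ∈ uAdd p q ↔ {n | {m | m + n ∈ s} ∈ q} ∈ p := Iff.rfl

lemma uAdd_eq (p q : Ultrafilter ℕ) : uAdd p q = p + q := by
  ext s
  rw [mem_uAdd]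
  have : (s ∈ p + q) ↔ ∀ᶠ n in (p : Filter ℕ), ∀ᶠ m in (q : Filter ℕ), n + m ∈ s :=
    Ultrafilter.eventually_add p q (· ∈ s)
  rw [this]
  simp only [Filter.eventually_iff, Ultrafilter.mem_coe]
  constructor <;> (intro h; convert h using 3; simp [add_comm])

lemma continuous_uAdd_right (q : Ultrafilter ℕ) : Continuous (fun p => uAdd p q) := by
  have : (fun p => uAdd p q) = (· + q) := by funext p; exact uAdd_eq p q
  rw [this]; exact Ultrafilter.continuous_add_left q

lemma mem_uAdd_pure {s : Set ℕ} {q : Ultrafilter ℕ} {i : ℕ} :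
    s ∈ uAdd (pure i) q ↔ {m | m + i ∈ s} ∈ q := by
  rw [mem_uAdd]; exact Ultrafilter.mem_pure

/-- A range `{p + q : p ∈ βℕ}` is a left ideal. -/
lemma range_isLeftIdeal (q : Ultrafilter ℕ) :
    IsLeftIdeal (Set.range (fun p => uAdd p q)) := by
  constructor
  · exact ⟨uAdd q q, q, rfl⟩
  · rintro p _ ⟨r, rfl⟩
    exact ⟨uAdd p r, by simp [uAdd_eq, add_assoc]⟩

lemma key (F : Set (Set ℕ)) (hfil : IsSetFilter F)
    (hsyn : ∀ B ∈ F, Syndetic B) (hidem : IdempotentFam F)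
    (hFne : F.Nonempty) :
    ∀ L : Set (Ultrafilter ℕ), IsMinimalLeftIdeal L →
      ∃ p ∈ L, uAdd p p = p ∧ ∀ B ∈ F, B ∈ p := by
  classical
  intro L hL
  obtain ⟨⟨⟨q0, hq0⟩, hIdeal⟩, hmin⟩ := hL
  set pos : Set ℕ := {m : ℕ | 0 < m} with hposdef
  -- L is compact
  have hrange : Set.range (fun p => uAdd p q0) = L := by
    apply hmin _ (range_isLeftIdeal q0)
    rintro _ ⟨r, rfl⟩; exact hIdeal r q0 hq0
  have hLcomp : IsCompact L := hrange ▸ (isCompact_range (continuous_uAdd_right q0))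
  -- an element of L concentrated on the positives
  set q1 : Ultrafilter ℕ := uAdd (pure 1) q0 with hq1def
  have hq1L : q1 ∈ L := hIdeal _ q0 hq0
  have hq1pos : pos ∈ q1 := by
    rw [hq1def, mem_uAdd_pure]
    have : {m : ℕ | m + 1 ∈ pos} = Set.univ := by
      ext m; simp [hposdef]
    rw [this]; exact Filter.univ_mem
  -- each B ∈ F belongs to some element of L concentrated on positives
  have step2 : ∀ B ∈ F, ∃ p ∈ L, B ∈ p ∧ pos ∈ p := by
    intro B hB
    obtain ⟨N, hN, hsynd⟩ := hsyn B hB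
    have hcover : pos ⊆ ⋃ i ∈ Set.Icc 1 N, {m : ℕ | m + i ∈ B} := by
      intro m hm
      obtain ⟨i, h1, h2, h3⟩ := hsynd m hm
      exact Set.mem_biUnion ⟨h1, h2⟩ h3
    have hunion : (⋃ i ∈ Set.Icc 1 N, {m : ℕ | m + i ∈ B}) ∈ q1 :=
      Filter.mem_of_superset hq1pos hcover
    obtain ⟨i, hi, hiB⟩ :=
      (Ultrafilter.finite_biUnion_mem_iff (Set.finite_Icc 1 N)).mp hunion
    refine ⟨uAdd (pure i) q1, hIdeal _ q1 hq1L, ?_, ?_⟩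
    · rw [mem_uAdd_pure]; exact hiB
    · rw [mem_uAdd_pure]
      have : {m : ℕ | m + i ∈ pos} = Set.univ := by
        ext m
        simp only [hposdef, Set.mem_setOf_eq, Set.mem_univ, iff_true]
        have := hi.1; omega
      rw [this]; exact Filter.univ_mem
  -- the set S of "good" points of L
  set S : Set (Ultrafilter ℕ) := {p | p ∈ L ∧ (∀ B ∈ F, B ∈ p) ∧ pos ∈ p} with hSdef
  -- finite intersection: a common member of finitely many sets of F
  have hfin : ∀ (u : Finset (Option {B : Set ℕ // B ∈ F})),
      ∃ C ∈ F, ∀ B : {B : Set ℕ // B ∈ F}, some B ∈ u → C ⊆ B.1 := by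
    intro u
    induction u using Finset.induction with
    | empty => exact ⟨hFne.choose, hFne.choose_spec, by simp⟩
    | @insert o u ho ih =>
      obtain ⟨C, hC, hCsub⟩ := ih
      cases o with
      | none =>
        exact ⟨C, hC, fun B hB => hCsub B (by
          rcases Finset.mem_insert.mp hB with h | h
          · exact absurd h (by simp)
          · exact h)⟩
      | some B0 =>
        refine ⟨C ∩ B0.1, hfil.2 hC B0.2, fun B hB => ?_⟩
        rcases Finset.mem_insert.mp hB with h | h
        · obtain rfl : B = B0 := Option.some_injective _ h
          exact Set.inter_subset_right
        · exact (Set.inter_subset_left).trans (hCsub B h)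
  have hSne : S.Nonempty := by
    have h := hLcomp.inter_iInter_nonempty
      (fun o : Option {B : Set ℕ // B ∈ F} =>
        {p : Ultrafilter ℕ | (Option.elim o pos Subtype.val) ∈ p})
      (fun o => ultrafilter_isClosed_basic _) ?_
    · obtain ⟨p, hpL, hp⟩ := h
      simp only [Set.mem_iInter] at hp
      refine ⟨p, hpL, fun B hB => hp (some ⟨B, hB⟩), hp none⟩
    · intro u
      obtain ⟨C, hC, hCsub⟩ := hfin u
      obtain ⟨p, hpL, hpC, hppos⟩ := step2 C hC
      refine ⟨p, hpL, ?_⟩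
      simp only [Set.mem_iInter]
      intro o ho
      cases o with
      | none => exact hppos
      | some B => exact Filter.mem_of_superset hpC (hCsub B ho)
  -- S is closed under uAdd
  have hSadd : ∀ x ∈ S, ∀ y ∈ S, uAdd x y ∈ S := by
    rintro x ⟨hxL, hxF, hxpos⟩ y ⟨hyL, hyF, hypos⟩
    refine ⟨hIdeal x y hyL, ?_, ?_⟩
    · intro B hB
      rw [mem_uAdd]
      refine Filter.mem_of_superset (hxF _ (hidem B hB)) ?_
      rintro n ⟨hn, hnF⟩
      exact Filter.mem_of_superset (hyF _ hnF) (fun m hm => hm.2)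
    · rw [mem_uAdd]
      refine Filter.univ_mem' ?_
      intro n
      refine Filter.mem_of_superset hypos ?_
      intro m hm
      simp only [hposdef, Set.mem_setOf_eq] at hm ⊢
      omega
  -- S is compact
  have hScomp : IsCompact S := by
    have hSeq : S = L ∩
        ((⋂ B ∈ F, {p : Ultrafilter ℕ | B ∈ p}) ∩ {p : Ultrafilter ℕ | pos ∈ p}) := by
      ext p
      simp only [hSdef, Set.mem_setOf_eq, Set.mem_inter_iff, Set.mem_iInter]
    rw [hSeq]
    exact hLcomp.inter_right
      ((isClosed_biInter (fun B _ => ultrafilter_isClosed_basic B)).inter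
        (ultrafilter_isClosed_basic pos))
  -- Ellis' lemma
  obtain ⟨m, hmS, hmm⟩ := exists_idempotent_in_compact_add_subsemigroup
    (fun r : Ultrafilter ℕ => Ultrafilter.continuous_add_left r) S hSne hScomp
    (by intro x hx y hy; rw [← uAdd_eq]; exact hSadd x hx y hy)
  exact ⟨m, hmS.1, by rw [uAdd_eq]; exact hmm, fun B hB => hmS.2.1 B hB⟩

theorem member_of_syndetic_idempotent_filter_is_strongly_central
    (A : Set ℕ) (F : Set (Set ℕ)) (hfil : IsSetFilter F)
    (hsyn : ∀ B ∈ F, Syndetic B) (hidem : IdempotentFam F) (hA : A ∈ F) :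
    (∀ L : Set (Ultrafilter ℕ), IsMinimalLeftIdeal L →
        ∃ p ∈ L, uAdd p p = p ∧ A ∈ p) ∧
      ∀ H : Set ℕ, Thick H → Central (A ∩ H) := by
  have hkey := key F hfil hsyn hidem ⟨A, hA⟩
  constructor
  · intro L hL
    obtain ⟨p, hpL, hpp, hpF⟩ := hkey L hL
    exact ⟨p, hpL, hpp, hpF A hA⟩
  · intro H hH
    -- an ultrafilter q all of whose shifts land in H
    have hq : ∃ q : Ultrafilter ℕ, ∀ G : Finset ℕ,
        {n : ℕ | 0 < n ∧ ∀ f ∈ G, f + n ∈ H} ∈ q := by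
      set f : Finset ℕ → Filter ℕ :=
        fun G => 𝓟 {n : ℕ | 0 < n ∧ ∀ g ∈ G, g + n ∈ H} with hfdef
      have hdir : Directed (· ≥ ·) f := by
        intro a b
        refine ⟨a ∪ b, ?_, ?_⟩ <;>
          · rw [hfdef]
            refine Filter.principal_mono.mpr ?_
            intro n hn
            exact ⟨hn.1, fun g hg => hn.2 g (by simp [hg])⟩
      have hne : ∀ G, (f G).NeBot := by
        intro G
        obtain ⟨n, hn, hnall⟩ := hH G
        exact Filter.principal_neBot_iff.mpr ⟨n, hn, hnall⟩
      have hinf : (⨅ G, f G).NeBot := iInf_neBot_of_directed' hdir hne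
      obtain ⟨q, hqle⟩ := Filter.exists_ultrafilter_le (⨅ G, f G)
      exact ⟨q, fun G => hqle (Filter.mem_iInf_of_mem G (Filter.mem_principal_self _))⟩
    obtain ⟨q, hq⟩ := hq
    set T0 : Set (Ultrafilter ℕ) := Set.range (fun p => uAdd p q) with hT0def
    have hT0H : ∀ p ∈ T0, H ∈ p := by
      rintro _ ⟨r, rfl⟩
      rw [mem_uAdd]
      refine Filter.univ_mem' ?_
      intro n
      refine Filter.mem_of_superset (hq {n}) ?_
      intro m hm
      have := hm.2 n (Finset.mem_singleton_self n)
      simpa [add_comm] using this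
    have hT0ideal : IsLeftIdeal T0 := range_isLeftIdeal q
    have hT0closed : IsClosed T0 :=
      (isCompact_range (continuous_uAdd_right q)).isClosed
    -- Zorn: a minimal closed left ideal inside T0
    set C : Set (Set (Ultrafilter ℕ)) :=
      {K | K ⊆ T0 ∧ IsLeftIdeal K ∧ IsClosed K} with hCdef
    have hchainCond : ∀ c ⊆ C, IsChain (· ⊆ ·) c → c.Nonempty →
        ∃ lb ∈ C, ∀ s ∈ c, lb ⊆ s := by
      intro c hcC hchain hcne
      have hNE : Nonempty c := hcne.to_subtype
      refine ⟨⋂₀ c, ⟨?_, ⟨?_, ?_⟩, ?_⟩, fun s hs => Set.sInter_subset_of_mem hs⟩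
      · obtain ⟨s, hs⟩ := hcne
        exact (Set.sInter_subset_of_mem hs).trans (hcC hs).1
      · refine IsCompact.nonempty_sInter_of_directed_nonempty_isCompact_isClosed ?_ ?_ ?_ ?_
        · intro a ha b hb
          rcases hchain.total ha hb with h | h
          · exact ⟨a, ha, Set.Subset.rfl, h⟩
          · exact ⟨b, hb, h, Set.Subset.rfl⟩
        · exact fun U hU => (hcC hU).2.1.1
        · exact fun U hU => (hcC hU).2.2.isCompact
        · exact fun U hU => (hcC hU).2.2
      · intro p r hr
        rw [Set.mem_sInter] at hr ⊢
        exact fun s hs => (hcC hs).2.1.2 p r (hr s hs)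
      · exact isClosed_sInter (fun s hs => (hcC hs).2.2)
    obtain ⟨M, hMsub, hMmin⟩ :=
      zorn_superset_nonempty C hchainCond T0 ⟨Set.Subset.rfl, hT0ideal, hT0closed⟩
    have hMC : M ∈ C := hMmin.1
    have hMminIdeal : IsMinimalLeftIdeal M := by
      refine ⟨hMC.2.1, ?_⟩
      intro L' hL' hL'sub
      obtain ⟨r, hr⟩ := hL'.1
      have hrangesubL' : Set.range (fun p => uAdd p r) ⊆ L' := by
        rintro _ ⟨p, rfl⟩; exact hL'.2 p r hr
      have hK : Set.range (fun p => uAdd p r) ∈ C :=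
        ⟨hrangesubL'.trans (hL'sub.trans hMC.1), range_isLeftIdeal r,
          (isCompact_range (continuous_uAdd_right r)).isClosed⟩
      have hKM : M ⊆ Set.range (fun p => uAdd p r) :=
        hMmin.2 hK (hrangesubL'.trans hL'sub)
      exact Set.Subset.antisymm hL'sub (hKM.trans hrangesubL')
    obtain ⟨p, hpM, hpp, hpF⟩ := hkey M hMminIdeal
    refine ⟨p, hpp, ⟨M, hMminIdeal, hpM⟩, ?_⟩
    have hHp : H ∈ p := hT0H p (hMsub hpM)
    exact Filter.inter_mem (hpF A hA) hHp
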